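/- (Proposition: equivalence of maxmin and QCQP) Let ε̃ ≥ 0 be the optimal value of the maxmin problem (minimize ε over a ∈ ℂᴺ with nonzero entries subject to q_i − 1 + σ²/|a_i|² ≤ ε for all i and Re(aᴴ S a) ≤ p), and assume σ > 0, p > 0 and that the optimum is attained. Then a vector a is an optimal solution of the maxmin problem if and only if a is an optimal solution of the quadratically constrained quadratic program: minimize Re(aᴴ S a) over a ∈ ℂᴺ subject to |a_i|² ≥ σ²/(ε̃ + 1 − q_i) for all i = 1,…,N. Moreover, the optimal value of this QCQP equals p. -/

import Mathlib

/-!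
Scaling a vector `a` by a real `t > 1` multiplies the relay power `Re (aᴴ S a)` by `t²` and
strictly lowers every noise power `ε_i(a) = q_i - 1 + σ² / |a_i|²`. So if some vector satisfying
the QCQP constraints at level `ε̃` had power below `p`, scaling it up would give a feasible point
of the maxmin problem with value below `ε̃`. Hence every QCQP-feasible vector has power at least
`p`, which a maxmin-optimal vector attains; and, because `ε̃ + 1 - q_i > 0`, the noise constraints
at level `ε̃` are exactly the QCQP constraints.
-/

open Matrix
open scoped ComplexOrder

lemma Matrix.posSemidef_permMatrix_mul_inv_mul_inv_mul_transpose {n 𝕜 : Type*} [Fintype n]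
    [DecidableEq n] [RCLike 𝕜] (π : Equiv.Perm n) (H : Matrix n n 𝕜) :
    (π.permMatrix 𝕜 * H⁻¹ * Hᴴ⁻¹ * (π.permMatrix 𝕜)ᵀ).PosSemidef := by
  have hP : (π.permMatrix 𝕜)ᵀ = (π.permMatrix 𝕜)ᴴ := by
    rw [transpose_permMatrix, conjTranspose_permMatrix]
  rw [hP, ← conjTranspose_nonsing_inv, Matrix.mul_assoc _ H⁻¹ᴴ, ← conjTranspose_mul]
  exact posSemidef_self_mul_conjTranspose _

lemma Matrix.PosSemidef.one_le_re_one_add_smul_apply_self {n : Type*} [Fintype n]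
    [DecidableEq n] {A : Matrix n n ℂ} (hA : A.PosSemidef) (γ : ℝ) (i : n) :
    1 ≤ ((1 + (γ : ℂ) ^ 2 • A) i i).re := by
  have hAii : 0 ≤ (A i i).re := (Complex.nonneg_iff.mp hA.diag_nonneg).1
  simp only [add_apply, one_apply_eq, smul_apply, smul_eq_mul, Complex.add_re, Complex.one_re,
    ← Complex.ofReal_pow, Complex.re_ofReal_mul]
  nlinarith [sq_nonneg γ]

lemma Matrix.re_star_dotProduct_mulVec_smul {n : Type*} [Fintype n] (S : Matrix n n ℂ) (t : ℝ)
    (a : n → ℂ) : (star (t • a) ⬝ᵥ S *ᵥ (t • a)).re = t ^ 2 * (star a ⬝ᵥ S *ᵥ a).re := by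
  rw [star_smul, star_trivial, mulVec_smul, smul_dotProduct, dotProduct_smul, Complex.smul_re,
    Complex.smul_re, smul_eq_mul, smul_eq_mul, ← mul_assoc, sq]

lemma exists_one_lt_and_sq_mul_le {r p : ℝ} (h : r < p) : ∃ t : ℝ, 1 < t ∧ t ^ 2 * r ≤ p := by
  rcases le_or_gt r 0 with hr | hr
  · exact ⟨2, one_lt_two, by nlinarith⟩
  · refine ⟨√(p / r), (Real.lt_sqrt zero_le_one).mpr ?_, ?_⟩
    · rwa [one_pow, one_lt_div hr]
    · rw [Real.sq_sqrt (div_pos (hr.trans h) hr).le, div_mul_cancel₀ _ hr.ne']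

lemma noise_le_iff {E : Type*} [NormedAddCommGroup E] {σ q ε : ℝ} {x : E} (hσ : 0 < σ)
    (hd : 0 < ε + 1 - q) :
    (x ≠ 0 ∧ q - 1 + σ ^ 2 / ‖x‖ ^ 2 ≤ ε) ↔ σ ^ 2 / (ε + 1 - q) ≤ ‖x‖ ^ 2 := by
  constructor
  · rintro ⟨hx, hle⟩
    have hx : 0 < ‖x‖ ^ 2 := by positivity
    rw [div_le_iff₀ hd, mul_comm, ← div_le_iff₀ hx]
    linarith
  · intro hle
    have hx : 0 < ‖x‖ ^ 2 := (div_pos (pow_pos hσ 2) hd).trans_le hle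
    refine ⟨fun hx0 => by simp [hx0] at hx, ?_⟩
    rw [div_le_iff₀ hd, mul_comm, ← div_le_iff₀ hx] at hle
    linarith

section MaxminQcqp

variable {ι : Type*} (q : ι → ℝ) (σ p : ℝ) (f : (ι → ℂ) → ℝ)

/-- The noise power `ε_i(a)` at station `i`. -/
noncomputable def noise (a : ι → ℂ) (i : ι) : ℝ := q i - 1 + σ ^ 2 / ‖a i‖ ^ 2

def MaxminFeasible (a : ι → ℂ) (ε : ℝ) : Prop :=
  (∀ i, a i ≠ 0) ∧ 0 ≤ ε ∧ (∀ i, noise q σ a i ≤ ε) ∧ f a ≤ p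

def QcqpFeasible (ε : ℝ) (a : ι → ℂ) : Prop :=
  ∀ i, σ ^ 2 / (ε + 1 - q i) ≤ ‖a i‖ ^ 2

def IsQcqpOptimal (ε : ℝ) (a : ι → ℂ) : Prop :=
  QcqpFeasible q σ ε a ∧ ∀ a', QcqpFeasible q σ ε a' → f a ≤ f a'

variable {q σ p f}

lemma noise_smul_lt {a : ι → ℂ} {t : ℝ} {i : ι} (hσ : 0 < σ) (ha : a i ≠ 0) (ht : 1 < t) :
    noise q σ (t • a) i < noise q σ a i := by
  have hai : 0 < ‖a i‖ ^ 2 := by positivity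
  have ht2 : 1 < t ^ 2 := one_lt_pow₀ ht two_ne_zero
  rw [noise, noise, Pi.smul_apply, norm_smul, mul_pow, Real.norm_eq_abs, sq_abs,
    add_lt_add_iff_left]
  exact div_lt_div_of_pos_left (pow_pos hσ 2) hai (lt_mul_of_one_lt_left hai ht2)

lemma MaxminFeasible.margin_pos {a : ι → ℂ} {ε : ℝ} (hσ : 0 < σ)
    (h : MaxminFeasible q σ p f a ε) (i : ι) : 0 < ε + 1 - q i := by
  have hai : 0 < σ ^ 2 / ‖a i‖ ^ 2 := by have := h.1 i; positivity
  have := h.2.2.1 i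
  rw [noise] at this
  linarith

lemma qcqpFeasible_iff {a : ι → ℂ} {ε : ℝ} (hσ : 0 < σ) (hd : ∀ i, 0 < ε + 1 - q i) :
    QcqpFeasible q σ ε a ↔ ∀ i, a i ≠ 0 ∧ noise q σ a i ≤ ε :=
  forall_congr' fun i => (noise_le_iff hσ (hd i)).symm

lemma maxminFeasible_iff {a : ι → ℂ} {ε : ℝ} (hσ : 0 < σ) (hd : ∀ i, 0 < ε + 1 - q i) :
    MaxminFeasible q σ p f a ε ↔ 0 ≤ ε ∧ QcqpFeasible q σ ε a ∧ f a ≤ p := by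
  rw [qcqpFeasible_iff hσ hd, forall_and, MaxminFeasible]
  tauto

variable [Fintype ι] [Nonempty ι]

variable (q σ) in
/-- The objective of the maxmin problem. -/
noncomputable def maxNoise (a : ι → ℂ) : ℝ :=
  Finset.univ.sup' Finset.univ_nonempty (noise q σ a)

lemma maxNoise_smul_lt {a : ι → ℂ} {t : ℝ} (hσ : 0 < σ) (ha : ∀ i, a i ≠ 0)
    (ht : 1 < t) : maxNoise q σ (t • a) < maxNoise q σ a :=
  (Finset.sup'_lt_iff _).mpr fun i hi =>
    (noise_smul_lt hσ (ha i) ht).trans_le (Finset.le_sup' _ hi)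

lemma maxNoise_nonneg (hq : ∀ i, 1 ≤ q i) (a : ι → ℂ) : 0 ≤ maxNoise q σ a := by
  obtain ⟨i⟩ := ‹Nonempty ι›
  have : 0 ≤ noise q σ a i := add_nonneg (sub_nonneg.mpr (hq i)) (by positivity)
  exact this.trans (Finset.le_sup' _ (Finset.mem_univ i))

lemma maxminFeasible_maxNoise (hq : ∀ i, 1 ≤ q i) {a : ι → ℂ}
    (ha : ∀ i, a i ≠ 0) (hfa : f a ≤ p) : MaxminFeasible q σ p f a (maxNoise q σ a) :=
  ⟨ha, maxNoise_nonneg hq a, fun i => Finset.le_sup' _ (Finset.mem_univ i), hfa⟩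

variable (hq : ∀ i, 1 ≤ q i) (hσ : 0 < σ) (hf : ∀ (t : ℝ) a, f (t • a) = t ^ 2 * f a)
  {ε₀ : ℝ} (hopt : ∀ a ε, MaxminFeasible q σ p f a ε → ε₀ ≤ ε)
include hq hσ hf hopt

lemma le_of_qcqpFeasible (hd : ∀ i, 0 < ε₀ + 1 - q i) {a : ι → ℂ}
    (ha : QcqpFeasible q σ ε₀ a) : p ≤ f a := by
  by_contra! hfa
  obtain ⟨t, ht, htp⟩ := exists_one_lt_and_sq_mul_le hfa
  have ha := (qcqpFeasible_iff hσ hd).mp ha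
  have hne : ∀ i, a i ≠ 0 := fun i => (ha i).1
  have hta : ∀ i, (t • a) i ≠ 0 := fun i =>
    smul_ne_zero (zero_lt_one.trans ht).ne' (hne i)
  refine (hopt _ _ (maxminFeasible_maxNoise hq hta ((hf t a).trans_le htp))).not_gt ?_
  calc maxNoise q σ (t • a) < maxNoise q σ a := maxNoise_smul_lt hσ hne ht
    _ ≤ ε₀ := Finset.sup'_le _ _ fun i _ => (ha i).2

variable {a₀ : ι → ℂ} (ha₀ : MaxminFeasible q σ p f a₀ ε₀)
include ha₀

lemma IsQcqpOptimal.apply_eq {a : ι → ℂ} (ha : IsQcqpOptimal q σ f ε₀ a) : f a = p := by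
  have hd := ha₀.margin_pos hσ
  exact le_antisymm ((ha.2 a₀ ((maxminFeasible_iff hσ hd).mp ha₀).2.1).trans ha₀.2.2.2)
    (le_of_qcqpFeasible hq hσ hf hopt hd ha.1)

lemma maxminFeasible_iff_isQcqpOptimal (a : ι → ℂ) :
    MaxminFeasible q σ p f a ε₀ ↔ IsQcqpOptimal q σ f ε₀ a := by
  have hd := ha₀.margin_pos hσ
  rw [maxminFeasible_iff hσ hd]
  constructor
  · rintro ⟨-, ha, hfa⟩
    exact ⟨ha, fun a' ha' => hfa.trans (le_of_qcqpFeasible hq hσ hf hopt hd ha')⟩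
  · intro ha
    exact ⟨ha₀.2.1, ha.1, (ha.apply_eq hq hσ hf hopt ha₀).le⟩

end MaxminQcqp

theorem maxmin_equiv_qcqp_general
    (N : ℕ) (hN : 1 ≤ N)
    (H : Matrix (Fin N) (Fin N) ℂ)
    (π : Equiv.Perm (Fin N)) (P : Matrix (Fin N) (Fin N) ℂ) (hP : P = π.permMatrix ℂ)
    (γ σ p : ℝ) (hσ : 0 < σ)
    (Q : Matrix (Fin N) (Fin N) ℂ)
    (hQ : Q = 1 + ((γ : ℂ)^2) • (P * H⁻¹ * (Hᴴ)⁻¹ * Pᵀ))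
    (S : Matrix (Fin N) (Fin N) ℂ)
    -- the maxmin feasibility predicate
    (Feasible : (Fin N → ℂ) → ℝ → Prop)
    (hFeasible : ∀ a ε, Feasible a ε ↔
      (∀ i, a i ≠ 0) ∧ 0 ≤ ε ∧
      (∀ i, (Q i i).re - 1 + σ^2 / ‖a i‖^2 ≤ ε) ∧
      (star a ⬝ᵥ S *ᵥ a).re ≤ p)
    -- the QCQP feasibility predicate at level εopt
    (εopt : ℝ)
    (QFeasible : (Fin N → ℂ) → Prop)
    (hQFeasible : ∀ a, QFeasible a ↔
      ∀ i, σ^2 / (εopt + 1 - (Q i i).re) ≤ ‖a i‖^2)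
    -- εopt is the attained optimal value of the maxmin problem
    (hattained : ∃ a₀, Feasible a₀ εopt)
    (hoptval : ∀ a ε, Feasible a ε → εopt ≤ ε) :
    (∀ a : Fin N → ℂ,
        Feasible a εopt ↔
          (QFeasible a ∧ ∀ a', QFeasible a' →
            (star a ⬝ᵥ S *ᵥ a).re ≤ (star a' ⬝ᵥ S *ᵥ a').re)) ∧
    (∀ a : Fin N → ℂ,
        (QFeasible a ∧ ∀ a', QFeasible a' →
            (star a ⬝ᵥ S *ᵥ a).re ≤ (star a' ⬝ᵥ S *ᵥ a').re) →
        (star a ⬝ᵥ S *ᵥ a).re = p) := by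
  have : Nonempty (Fin N) := Fin.pos_iff_nonempty.mp hN
  have hq : ∀ i, 1 ≤ (Q i i).re := by
    subst hQ hP
    exact
      (posSemidef_permMatrix_mul_inv_mul_inv_mul_transpose π H).one_le_re_one_add_smul_apply_self γ
  obtain rfl : Feasible = MaxminFeasible (fun i => (Q i i).re) σ p
      (fun a => (star a ⬝ᵥ S *ᵥ a).re) := by
    ext a ε
    exact hFeasible a ε
  obtain rfl : QFeasible = QcqpFeasible (fun i => (Q i i).re) σ εopt := by
    ext a
    exact hQFeasible a
  obtain ⟨a₀, ha₀⟩ := hattained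
  have hf := re_star_dotProduct_mulVec_smul S
  exact ⟨maxminFeasible_iff_isQcqpOptimal hq hσ hf hoptval ha₀,
    fun _ => IsQcqpOptimal.apply_eq hq hσ hf hoptval ha₀⟩

/-- Proposition: equivalence of maxmin and QCQP: if `εopt` is the attained optimal
value of the maxmin problem, then `a` is optimal for the maxmin problem iff `a` is optimal for
the QCQP `min Re(aᴴ S a)` subject to `|a_i|² ≥ σ²/(εopt + 1 − q_i)`, and the optimal value of the
QCQP equals `p`. -/
theorem maxmin_equiv_qcqp
    (N : ℕ) (hN : 1 ≤ N)
    (H : Matrix (Fin N) (Fin N) ℂ) (hH : IsUnit H.det)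
    (π : Equiv.Perm (Fin N)) (P : Matrix (Fin N) (Fin N) ℂ) (hP : P = π.permMatrix ℂ)
    (γ σ p : ℝ) (hγ : 0 ≤ γ) (hσ : 0 < σ) (hp : 0 < p)
    (Q : Matrix (Fin N) (Fin N) ℂ)
    (hQ : Q = 1 + ((γ : ℂ)^2) • (P * H⁻¹ * (Hᴴ)⁻¹ * Pᵀ))
    (S : Matrix (Fin N) (Fin N) ℂ)
    (hS : ∀ i j, S i j = Q j i * (((H.map (starRingEnd ℂ))⁻¹ * (Hᵀ)⁻¹) i j))
    -- the maxmin feasibility predicate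
    (Feasible : (Fin N → ℂ) → ℝ → Prop)
    (hFeasible : ∀ a ε, Feasible a ε ↔
      (∀ i, a i ≠ 0) ∧ 0 ≤ ε ∧
      (∀ i, (Q i i).re - 1 + σ^2 / ‖a i‖^2 ≤ ε) ∧
      (star a ⬝ᵥ S *ᵥ a).re ≤ p)
    -- the QCQP feasibility predicate at level εopt
    (εopt : ℝ) (hεopt : 0 ≤ εopt)
    (QFeasible : (Fin N → ℂ) → Prop)
    (hQFeasible : ∀ a, QFeasible a ↔
      ∀ i, σ^2 / (εopt + 1 - (Q i i).re) ≤ ‖a i‖^2)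
    -- εopt is the attained optimal value of the maxmin problem
    (hattained : ∃ a₀, Feasible a₀ εopt)
    (hoptval : ∀ a ε, Feasible a ε → εopt ≤ ε) :
    (∀ a : Fin N → ℂ,
        Feasible a εopt ↔
          (QFeasible a ∧ ∀ a', QFeasible a' →
            (star a ⬝ᵥ S *ᵥ a).re ≤ (star a' ⬝ᵥ S *ᵥ a').re)) ∧
    (∀ a : Fin N → ℂ,
        (QFeasible a ∧ ∀ a', QFeasible a' →
            (star a ⬝ᵥ S *ᵥ a).re ≤ (star a' ⬝ᵥ S *ᵥ a').re) →
        (star a ⬝ᵥ S *ᵥ a).re = p) :=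
  maxmin_equiv_qcqp_general N hN H π P hP γ σ p hσ Q hQ S Feasible hFeasible εopt QFeasible
    hQFeasible hattained hoptval
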